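/- arXiv:2505.02846 — 4 statements merged into one kernel-verified Lean document; each statement's English description precedes it below -/
import Mathlib

section
/- Existence part of the Neyman–Pearson lemma with randomization: for every α with 0 < α < 1 there exist a constant k ≥ 0 and a randomization weight γ ∈ [0,1] such that the test φ defined by φ(x) = 1 if f₁(x) > k·f₀(x), φ(x) = γ if f₁(x) = k·f₀(x), and φ(x) = 0 if f₁(x) < k·f₀(x), has size exactly α, i.e. ∫ φ·f₀ dν = α. -/
open MeasureTheory Filter Set Topology

/-! The size `G k` of the strict test `{k f₀ < f₁}` is antitone and right-continuous in `k`, its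
left limit is the size `H k` of `{k f₀ ≤ f₁}`, it equals `1` for `k < 0` and tends to `0` as
`k → ∞`. At `k = inf {k | G k ≤ α}` we therefore get `G k ≤ α ≤ H k`, and since
`H k = G k + ∫_{f₁ = k f₀} f₀`, a randomization `γ ∈ [0, 1]` on the boundary closes the gap. -/

theorem exists_le_and_le_of_antitone {G H : ℝ → ℝ} (hG : Antitone G)
    (hright : ∀ k, Tendsto G (𝓝[>] k) (𝓝 (G k))) (hleft : ∀ k, Tendsto G (𝓝[<] k) (𝓝 (H k)))
    {a α : ℝ} (hbelow : ∀ k < a, α < G k) (hα : ∃ k, G k ≤ α) :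
    ∃ k, a ≤ k ∧ G k ≤ α ∧ α ≤ H k := by
  have ha : a ∈ lowerBounds {k | G k ≤ α} := fun k hk ↦ not_lt.1 fun h ↦ (hbelow k h).not_ge hk
  refine ⟨sInf {k | G k ≤ α}, le_csInf hα ha, ?_, ?_⟩
  · refine le_of_tendsto (hright _) ?_
    filter_upwards [self_mem_nhdsWithin] with k hk
    obtain ⟨m, hm, hmk⟩ := exists_lt_of_csInf_lt hα hk
    exact (hG hmk.le).trans hm
  · refine ge_of_tendsto (hleft _) ?_
    filter_upwards [self_mem_nhdsWithin] with k (hk : k < _)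
    exact le_of_not_gt fun h ↦ hk.not_ge (csInf_le ⟨a, ha⟩ h.le)

section Order

variable {α : Type*} [LinearOrder α] [TopologicalSpace α] [OrderTopology α]

theorem eventually_nhdsGT_lt_iff (a c : α) : ∀ᶠ b in 𝓝[>] a, b < c ↔ a < c := by
  rcases lt_or_ge a c with h | h
  · filter_upwards [nhdsWithin_le_nhds (eventually_lt_nhds h)] with b hb using iff_of_true hb h
  · filter_upwards [self_mem_nhdsWithin] with b (hb : a < b)
    exact iff_of_false (h.trans hb.le).not_gt h.not_gt

theorem eventually_nhdsLT_lt_iff_le (a c : α) : ∀ᶠ b in 𝓝[<] a, b < c ↔ a ≤ c := by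
  rcases le_or_gt a c with h | h
  · filter_upwards [self_mem_nhdsWithin] with b (hb : b < a) using iff_of_true (hb.trans_le h) h
  · filter_upwards [nhdsWithin_le_nhds (eventually_gt_nhds h)] with b hb
    exact iff_of_false hb.not_gt h.not_ge

end Order

theorem tendsto_setIntegral_of_ae_eventually_mem_iff {X E ι : Type*} [MeasurableSpace X]
    [NormedAddCommGroup E] [NormedSpace ℝ E] {μ : Measure X} {l : Filter ι}
    [l.IsCountablyGenerated] {f : X → E} {s : ι → Set X} {t : Set X}
    (hs : ∀ i, MeasurableSet (s i)) (ht : MeasurableSet t) (hf : Integrable f μ)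
    (hst : ∀ᵐ x ∂μ, f x ≠ 0 → ∀ᶠ i in l, x ∈ s i ↔ x ∈ t) :
    Tendsto (fun i ↦ ∫ x in s i, f x ∂μ) l (𝓝 (∫ x in t, f x ∂μ)) := by
  simp_rw [← integral_indicator (hs _), ← integral_indicator ht]
  refine tendsto_integral_filter_of_dominated_convergence (‖f ·‖)
    (.of_forall fun i ↦ (hf.indicator (hs i)).aestronglyMeasurable)
    (.of_forall fun i ↦ ae_of_all _ fun x ↦ norm_indicator_le_norm_self _ _) hf.norm ?_
  filter_upwards [hst] with x hx
  classical
  by_cases hx₀ : f x = 0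
  · simp only [indicator_apply, hx₀, ite_self]
    exact tendsto_const_nhds
  · refine tendsto_const_nhds.congr' ?_
    filter_upwards [hx hx₀] with i hi
    simp only [indicator_apply, hi]

section NeymanPearson

variable {X : Type*} [MeasurableSpace X] {ν : Measure X} {f₀ f₁ : X → ℝ}

theorem antitone_setIntegral_mul_lt (hf₀ : ∀ x, 0 ≤ f₀ x) (hint₀ : Integrable f₀ ν) :
    Antitone fun k ↦ ∫ x in {x | k * f₀ x < f₁ x}, f₀ x ∂ν := by
  intro k k' hk
  refine setIntegral_mono_set hint₀.integrableOn (ae_of_all _ fun x ↦ hf₀ x) (ae_of_all _ ?_)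
  intro x (hx : k' * f₀ x < f₁ x)
  exact (mul_le_mul_of_nonneg_right hk (hf₀ x)).trans_lt hx

theorem setIntegral_mul_lt_of_neg (hf₀ : ∀ x, 0 ≤ f₀ x) (hf₁ : ∀ x, 0 ≤ f₁ x) {k : ℝ}
    (hk : k < 0) : ∫ x in {x | k * f₀ x < f₁ x}, f₀ x ∂ν = ∫ x, f₀ x ∂ν := by
  refine setIntegral_eq_integral_of_forall_compl_eq_zero fun x (hx : ¬ k * f₀ x < f₁ x) ↦ ?_
  nlinarith [hf₀ x, hf₁ x]

theorem setIntegral_mul_le_eq_add (hf₀m : Measurable f₀) (hf₁m : Measurable f₁)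
    (hint₀ : Integrable f₀ ν) (k : ℝ) :
    ∫ x in {x | k * f₀ x ≤ f₁ x}, f₀ x ∂ν =
      ∫ x in {x | k * f₀ x < f₁ x}, f₀ x ∂ν + ∫ x in {x | f₁ x = k * f₀ x}, f₀ x ∂ν := by
  have hunion : {x | k * f₀ x ≤ f₁ x} = {x | k * f₀ x < f₁ x} ∪ {x | f₁ x = k * f₀ x} := by
    ext x
    simp only [mem_ofPred_eq, mem_union, le_iff_lt_or_eq, eq_comm]
  exact hunion ▸ setIntegral_union
    (disjoint_left.2 fun x (hlt : _ < _) (heq : _ = _) ↦ hlt.ne' heq)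
    (measurableSet_eq_fun hf₁m (hf₀m.const_mul k)) hint₀.integrableOn hint₀.integrableOn

theorem tendsto_setIntegral_mul_lt_nhdsGT (hf₀ : ∀ x, 0 ≤ f₀ x) (hf₀m : Measurable f₀)
    (hf₁m : Measurable f₁) (hint₀ : Integrable f₀ ν) (k : ℝ) :
    Tendsto (fun k' ↦ ∫ x in {x | k' * f₀ x < f₁ x}, f₀ x ∂ν) (𝓝[>] k)
      (𝓝 (∫ x in {x | k * f₀ x < f₁ x}, f₀ x ∂ν)) := by
  refine tendsto_setIntegral_of_ae_eventually_mem_iff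
    (fun k' ↦ measurableSet_lt (hf₀m.const_mul k') hf₁m) (measurableSet_lt (hf₀m.const_mul k) hf₁m)
    hint₀ (ae_of_all _ fun x hx ↦ ?_)
  have hx₀ : 0 < f₀ x := (hf₀ x).lt_of_ne' hx
  simpa only [mem_ofPred_eq, ← lt_div_iff₀ hx₀] using eventually_nhdsGT_lt_iff k (f₁ x / f₀ x)

theorem tendsto_setIntegral_mul_lt_nhdsLT (hf₀ : ∀ x, 0 ≤ f₀ x) (hf₀m : Measurable f₀)
    (hf₁m : Measurable f₁) (hint₀ : Integrable f₀ ν) (k : ℝ) :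
    Tendsto (fun k' ↦ ∫ x in {x | k' * f₀ x < f₁ x}, f₀ x ∂ν) (𝓝[<] k)
      (𝓝 (∫ x in {x | k * f₀ x ≤ f₁ x}, f₀ x ∂ν)) := by
  refine tendsto_setIntegral_of_ae_eventually_mem_iff
    (fun k' ↦ measurableSet_lt (hf₀m.const_mul k') hf₁m) (measurableSet_le (hf₀m.const_mul k) hf₁m)
    hint₀ (ae_of_all _ fun x hx ↦ ?_)
  have hx₀ : 0 < f₀ x := (hf₀ x).lt_of_ne' hx
  simpa only [mem_ofPred_eq, ← lt_div_iff₀ hx₀, ← le_div_iff₀ hx₀] using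
    eventually_nhdsLT_lt_iff_le k (f₁ x / f₀ x)

theorem tendsto_setIntegral_mul_lt_atTop (hf₀ : ∀ x, 0 ≤ f₀ x) (hf₀m : Measurable f₀)
    (hf₁m : Measurable f₁) (hint₀ : Integrable f₀ ν) :
    Tendsto (fun k ↦ ∫ x in {x | k * f₀ x < f₁ x}, f₀ x ∂ν) atTop (𝓝 0) := by
  rw [← setIntegral_empty (f := f₀) (μ := ν)]
  refine tendsto_setIntegral_of_ae_eventually_mem_iff
    (fun k ↦ measurableSet_lt (hf₀m.const_mul k) hf₁m) MeasurableSet.empty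
    hint₀ (ae_of_all _ fun x hx ↦ ?_)
  have hx₀ : 0 < f₀ x := (hf₀ x).lt_of_ne' hx
  filter_upwards [eventually_ge_atTop (f₁ x / f₀ x)] with k hk
  simpa only [mem_ofPred_eq, ← lt_div_iff₀ hx₀, mem_empty_iff_false, iff_false, not_lt]

theorem integral_neymanPearsonTest_mul (hf₀m : Measurable f₀) (hf₁m : Measurable f₁)
    (hint₀ : Integrable f₀ ν) (k γ : ℝ) :
    ∫ x, (if f₁ x > k * f₀ x then (1 : ℝ) else if f₁ x = k * f₀ x then γ else 0) * f₀ x ∂ν =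
      ∫ x in {x | k * f₀ x < f₁ x}, f₀ x ∂ν + γ * ∫ x in {x | f₁ x = k * f₀ x}, f₀ x ∂ν := by
  have hlt := measurableSet_lt (hf₀m.const_mul k) hf₁m
  have heq := measurableSet_eq_fun hf₁m (hf₀m.const_mul k)
  rw [← integral_indicator hlt, ← integral_indicator heq, ← integral_const_mul,
    ← integral_add (hint₀.indicator hlt) ((hint₀.indicator heq).const_mul γ)]
  congr 1 with x
  simp only [indicator_apply, mem_ofPred_eq, gt_iff_lt]
  split_ifs <;> linarith

end NeymanPearson

theorem neyman_pearson_existence_general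
    {X : Type*} [MeasurableSpace X] (ν : Measure X)
    (f₀ f₁ : X → ℝ) (hf₀m : Measurable f₀) (hf₁m : Measurable f₁)
    (hf₀ : ∀ x, 0 ≤ f₀ x) (hf₁ : ∀ x, 0 ≤ f₁ x)
    (hint₀ : Integrable f₀ ν)
    (hnorm₀ : ∫ x, f₀ x ∂ν = 1)
    (α : ℝ) (hα₀ : 0 < α) (hα₁ : α < 1) :
    ∃ (k γ : ℝ), 0 ≤ k ∧ 0 ≤ γ ∧ γ ≤ 1 ∧
      ∫ x, (if f₁ x > k * f₀ x then (1 : ℝ)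
            else if f₁ x = k * f₀ x then γ else 0) * f₀ x ∂ν = α := by
  obtain ⟨k, hk, hlt, hle⟩ := exists_le_and_le_of_antitone (a := 0)
    (antitone_setIntegral_mul_lt hf₀ hint₀)
    (tendsto_setIntegral_mul_lt_nhdsGT hf₀ hf₀m hf₁m hint₀)
    (tendsto_setIntegral_mul_lt_nhdsLT hf₀ hf₀m hf₁m hint₀)
    (fun k hk ↦ by rwa [setIntegral_mul_lt_of_neg hf₀ hf₁ hk, hnorm₀])
    ((tendsto_setIntegral_mul_lt_atTop hf₀ hf₀m hf₁m hint₀).eventually (ge_mem_nhds hα₀)).exists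
  rw [setIntegral_mul_le_eq_add hf₀m hf₁m hint₀] at hle
  obtain ⟨γ, ⟨hγ₀, hγ₁⟩, hγ⟩ := intermediate_value_Icc zero_le_one
    (f := fun γ ↦ ∫ x in {x | k * f₀ x < f₁ x}, f₀ x ∂ν + γ * ∫ x in {x | f₁ x = k * f₀ x}, f₀ x ∂ν)
    (by fun_prop) ⟨by simpa using hlt, by simpa using hle⟩
  exact ⟨k, γ, hk, hγ₀, hγ₁, (integral_neymanPearsonTest_mul hf₀m hf₁m hint₀ k γ).trans hγ⟩

/-- Existence part of the Neyman–Pearson lemma with randomization: for every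
`α` with `0 < α < 1` there exist a constant `k ≥ 0` and a randomization weight
`γ ∈ [0,1]` such that the test `φ` given by `φ x = 1` if `f₁ x > k * f₀ x`,
`φ x = γ` if `f₁ x = k * f₀ x`, and `φ x = 0` otherwise, has size exactly `α`. -/
theorem neyman_pearson_existence
    {X : Type*} [MeasurableSpace X] (ν : Measure X) [SigmaFinite ν]
    (f₀ f₁ : X → ℝ) (hf₀m : Measurable f₀) (hf₁m : Measurable f₁)
    (hf₀ : ∀ x, 0 ≤ f₀ x) (hf₁ : ∀ x, 0 ≤ f₁ x)
    (hint₀ : Integrable f₀ ν) (hint₁ : Integrable f₁ ν)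
    (hnorm₀ : ∫ x, f₀ x ∂ν = 1) (hnorm₁ : ∫ x, f₁ x ∂ν = 1)
    (α : ℝ) (hα₀ : 0 < α) (hα₁ : α < 1) :
    ∃ (k γ : ℝ), 0 ≤ k ∧ 0 ≤ γ ∧ γ ≤ 1 ∧
      ∫ x, (if f₁ x > k * f₀ x then (1 : ℝ)
            else if f₁ x = k * f₀ x then γ else 0) * f₀ x ∂ν = α :=
  neyman_pearson_existence_general ν f₀ f₁ hf₀m hf₁m hf₀ hf₁ hint₀ hnorm₀ α hα₀ hα₁
end

section
/- Sufficiency part of the Neyman–Pearson lemma: let φ be a test, k ≥ 0 a constant, and α = ∫ φ·f₀ dν its size, such that ν-almost everywhere φ(x) = 1 whenever f₁(x) > k·f₀(x) and φ(x) = 0 whenever f₁(x) < k·f₀(x). Then φ is most powerful at level α: for every test ψ with ∫ ψ·f₀ dν ≤ α one has ∫ ψ·f₁ dν ≤ ∫ φ·f₁ dν. -/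
open MeasureTheory

lemma np_aux_int {X : Type*} [MeasurableSpace X] {ν : Measure X}
    {f g : X → ℝ} (hfm : Measurable f) (hgm : Measurable g)
    (hf : ∀ x, 0 ≤ f x) (hg0 : ∀ x, 0 ≤ g x) (hg1 : ∀ x, g x ≤ 1)
    (hint : Integrable f ν) : Integrable (fun x => g x * f x) ν := by
  refine hint.mono ((hgm.mul hfm).aestronglyMeasurable) (Filter.Eventually.of_forall fun x => ?_)
  rw [Real.norm_eq_abs, Real.norm_eq_abs, abs_of_nonneg (hf x),
    abs_of_nonneg (mul_nonneg (hg0 x) (hf x))]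
  nlinarith [hf x, hg0 x, hg1 x]

/-- Sufficiency part of the Neyman–Pearson lemma: a test `φ` of size
`α = ∫ φ·f₀ dν` which ν-a.e. equals `1` where `f₁ > k·f₀` and `0` where
`f₁ < k·f₀` is most powerful at level `α`. -/
theorem neyman_pearson_sufficiency
    {X : Type*} [MeasurableSpace X] (ν : Measure X) [SigmaFinite ν]
    (f₀ f₁ : X → ℝ) (hf₀m : Measurable f₀) (hf₁m : Measurable f₁)
    (hf₀ : ∀ x, 0 ≤ f₀ x) (hf₁ : ∀ x, 0 ≤ f₁ x)
    (hint₀ : Integrable f₀ ν) (hint₁ : Integrable f₁ ν)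
    (hnorm₀ : ∫ x, f₀ x ∂ν = 1) (hnorm₁ : ∫ x, f₁ x ∂ν = 1)
    (φ : X → ℝ) (hφm : Measurable φ) (hφ₀ : ∀ x, 0 ≤ φ x) (hφ₁ : ∀ x, φ x ≤ 1)
    (k : ℝ) (hk : 0 ≤ k)
    (hform : ∀ᵐ x ∂ν, (f₁ x > k * f₀ x → φ x = 1) ∧ (f₁ x < k * f₀ x → φ x = 0)) :
    ∀ ψ : X → ℝ, Measurable ψ → (∀ x, 0 ≤ ψ x) → (∀ x, ψ x ≤ 1) →
      ∫ x, ψ x * f₀ x ∂ν ≤ ∫ x, φ x * f₀ x ∂ν →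
      ∫ x, ψ x * f₁ x ∂ν ≤ ∫ x, φ x * f₁ x ∂ν := by
  intro ψ hψm hψ₀ hψ₁ hsize
  have iφ₀ := np_aux_int hf₀m hφm hf₀ hφ₀ hφ₁ hint₀
  have iφ₁ := np_aux_int hf₁m hφm hf₁ hφ₀ hφ₁ hint₁
  have iψ₀ := np_aux_int hf₀m hψm hf₀ hψ₀ hψ₁ hint₀
  have iψ₁ := np_aux_int hf₁m hψm hf₁ hψ₀ hψ₁ hint₁
  have key : 0 ≤ ∫ x, (φ x - ψ x) * (f₁ x - k * f₀ x) ∂ν := by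
    refine integral_nonneg_of_ae ?_
    filter_upwards [hform] with x hx
    show (0:ℝ) ≤ (φ x - ψ x) * (f₁ x - k * f₀ x)
    rcases lt_trichotomy (f₁ x) (k * f₀ x) with h | h | h
    · rw [hx.2 h]; nlinarith [hψ₀ x]
    · simp [h]
    · rw [hx.1 h]; nlinarith [hψ₁ x]
  have expand : ∫ x, (φ x - ψ x) * (f₁ x - k * f₀ x) ∂ν =
      (∫ x, φ x * f₁ x ∂ν - ∫ x, ψ x * f₁ x ∂ν)
      - k * (∫ x, φ x * f₀ x ∂ν - ∫ x, ψ x * f₀ x ∂ν) := by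
    have : ∀ x, (φ x - ψ x) * (f₁ x - k * f₀ x) =
        (φ x * f₁ x - ψ x * f₁ x) - k * (φ x * f₀ x - ψ x * f₀ x) := by
      intro x; ring
    simp_rw [this]
    have i1 : Integrable (fun x => φ x * f₁ x - ψ x * f₁ x) ν := iφ₁.sub iψ₁
    have i0 : Integrable (fun x => k * (φ x * f₀ x - ψ x * f₀ x)) ν :=
      (iφ₀.sub iψ₀).const_mul k
    rw [integral_sub i1 i0, integral_sub iφ₁ iψ₁, integral_const_mul,
      integral_sub iφ₀ iψ₀]
  rw [expand] at key
  nlinarith [mul_nonneg hk (sub_nonneg.mpr hsize)]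
end

section
/- Necessity part of the Neyman–Pearson lemma: let φ be a test of size α = ∫ φ·f₀ dν with constant k ≥ 0 such that ν-almost everywhere φ(x) = 1 whenever f₁(x) > k·f₀(x) and φ(x) = 0 whenever f₁(x) < k·f₀(x). If ψ is any test with ∫ ψ·f₀ dν ≤ α and ∫ ψ·f₁ dν ≥ ∫ φ·f₁ dν (i.e. ψ is most powerful at level α), then ψ agrees with the likelihood-ratio form ν-almost everywhere off the boundary set: for ν-almost every x with f₁(x) ≠ k·f₀(x), ψ(x) = φ(x). -/
/-!
The integrand `(φ - ψ) * (f₁ - k * f₀)` is nonnegative almost everywhere: where `f₁ > k f₀`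
we have `φ = 1 ≥ ψ`, and where `f₁ < k f₀` we have `φ = 0 ≤ ψ`. Its integral is the power
of `φ` minus that of `ψ` plus `k` times the size of `ψ` minus that of `φ`, hence `≤ 0`.
So it vanishes almost everywhere, and off the boundary `f₁ = k f₀` this forces `ψ = φ`.
-/

open MeasureTheory

theorem MeasureTheory.Integrable.mul_of_nonneg_of_le_one {X : Type*} [MeasurableSpace X]
    {ν : Measure X} {τ f : X → ℝ} (hf : Integrable f ν) (hτm : AEStronglyMeasurable τ ν)
    (hτ₀ : ∀ x, 0 ≤ τ x) (hτ₁ : ∀ x, τ x ≤ 1) : Integrable (fun x => τ x * f x) ν :=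
  hf.bdd_mul hτm (c := 1) (.of_forall fun x => by
    rw [Real.norm_eq_abs, abs_of_nonneg (hτ₀ x)]; exact hτ₁ x)

theorem sub_mul_sub_nonneg_of_likelihood_ratio_form {p q s t : ℝ}
    (hp : (s > t → p = 1) ∧ (s < t → p = 0)) (hq₀ : 0 ≤ q) (hq₁ : q ≤ 1) :
    0 ≤ (p - q) * (s - t) := by
  rcases lt_trichotomy s t with h | rfl | h
  · rw [hp.2 h]; nlinarith
  · simp
  · rw [hp.1 h]; nlinarith

section

variable {X : Type*} [MeasurableSpace X] {ν : Measure X} {f₀ f₁ φ ψ : X → ℝ} {k : ℝ}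

theorem integral_sub_mul_sub_likelihood_ratio (hφ₀ : Integrable (fun x => φ x * f₀ x) ν)
    (hφ₁ : Integrable (fun x => φ x * f₁ x) ν) (hψ₀ : Integrable (fun x => ψ x * f₀ x) ν)
    (hψ₁ : Integrable (fun x => ψ x * f₁ x) ν) :
    ∫ x, (φ x - ψ x) * (f₁ x - k * f₀ x) ∂ν =
      (∫ x, φ x * f₁ x ∂ν - ∫ x, ψ x * f₁ x ∂ν)
        - k * (∫ x, φ x * f₀ x ∂ν - ∫ x, ψ x * f₀ x ∂ν) := by
  calc ∫ x, (φ x - ψ x) * (f₁ x - k * f₀ x) ∂ν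
      = ∫ x, (φ x * f₁ x - ψ x * f₁ x) - k * (φ x * f₀ x - ψ x * f₀ x) ∂ν := by
        congr 1; funext x; ring
    _ = _ := by
        rw [integral_sub (f := fun x => φ x * f₁ x - ψ x * f₁ x)
          (g := fun x => k * (φ x * f₀ x - ψ x * f₀ x)) (hφ₁.sub hψ₁)
          ((hφ₀.sub hψ₀).const_mul k), integral_const_mul,
          integral_sub hφ₁ hψ₁, integral_sub hφ₀ hψ₀]

end

theorem neyman_pearson_necessity_general
    {X : Type*} [MeasurableSpace X] (ν : Measure X)
    (f₀ f₁ : X → ℝ)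
    (hint₀ : Integrable f₀ ν) (hint₁ : Integrable f₁ ν)
    (φ : X → ℝ) (hφm : Measurable φ) (hφ₀ : ∀ x, 0 ≤ φ x) (hφ₁ : ∀ x, φ x ≤ 1)
    (k : ℝ) (hk : 0 ≤ k)
    (hform : ∀ᵐ x ∂ν, (f₁ x > k * f₀ x → φ x = 1) ∧ (f₁ x < k * f₀ x → φ x = 0))
    (ψ : X → ℝ) (hψm : Measurable ψ) (hψ₀ : ∀ x, 0 ≤ ψ x) (hψ₁ : ∀ x, ψ x ≤ 1)
    (hsize : ∫ x, ψ x * f₀ x ∂ν ≤ ∫ x, φ x * f₀ x ∂ν)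
    (hpower : ∫ x, φ x * f₁ x ∂ν ≤ ∫ x, ψ x * f₁ x ∂ν) :
    ∀ᵐ x ∂ν, f₁ x ≠ k * f₀ x → ψ x = φ x := by
  have hφf₀ := hint₀.mul_of_nonneg_of_le_one hφm.aestronglyMeasurable hφ₀ hφ₁
  have hφf₁ := hint₁.mul_of_nonneg_of_le_one hφm.aestronglyMeasurable hφ₀ hφ₁
  have hψf₀ := hint₀.mul_of_nonneg_of_le_one hψm.aestronglyMeasurable hψ₀ hψ₁
  have hψf₁ := hint₁.mul_of_nonneg_of_le_one hψm.aestronglyMeasurable hψ₀ hψ₁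
  set g : X → ℝ := fun x => (φ x - ψ x) * (f₁ x - k * f₀ x)
  have hg_int : Integrable g ν := (hφf₁.sub hψf₁).sub ((hφf₀.sub hψf₀).const_mul k) |>.congr
    (.of_forall fun x => by simp only [g, Pi.sub_apply]; ring)
  have hg_nonneg : 0 ≤ᵐ[ν] g := hform.mono fun x hx =>
    sub_mul_sub_nonneg_of_likelihood_ratio_form hx (hψ₀ x) (hψ₁ x)
  have hg_integral : ∫ x, g x ∂ν ≤ 0 := by
    rw [integral_sub_mul_sub_likelihood_ratio hφf₀ hφf₁ hψf₀ hψf₁]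
    linarith [mul_nonneg hk (sub_nonneg.2 hsize)]
  have hg_zero : g =ᵐ[ν] 0 := (integral_eq_zero_iff_of_nonneg_ae hg_nonneg hg_int).1
    (le_antisymm hg_integral (integral_nonneg_of_ae hg_nonneg))
  filter_upwards [hg_zero] with x hx hne
  rcases mul_eq_zero.1 hx with h | h
  · exact (sub_eq_zero.1 h).symm
  · exact absurd (sub_eq_zero.1 h) hne

/-- Necessity part of the Neyman–Pearson lemma: if `φ` has the likelihood-ratio
form with constant `k ≥ 0` and size `α = ∫ φ·f₀ dν`, then any test `ψ` with
size at most `α` and power at least that of `φ` agrees with `φ` ν-a.e. off the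
boundary set `{x | f₁ x = k * f₀ x}`. -/
theorem neyman_pearson_necessity
    {X : Type*} [MeasurableSpace X] (ν : Measure X) [SigmaFinite ν]
    (f₀ f₁ : X → ℝ) (hf₀m : Measurable f₀) (hf₁m : Measurable f₁)
    (hf₀ : ∀ x, 0 ≤ f₀ x) (hf₁ : ∀ x, 0 ≤ f₁ x)
    (hint₀ : Integrable f₀ ν) (hint₁ : Integrable f₁ ν)
    (hnorm₀ : ∫ x, f₀ x ∂ν = 1) (hnorm₁ : ∫ x, f₁ x ∂ν = 1)
    (φ : X → ℝ) (hφm : Measurable φ) (hφ₀ : ∀ x, 0 ≤ φ x) (hφ₁ : ∀ x, φ x ≤ 1)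
    (k : ℝ) (hk : 0 ≤ k)
    (hform : ∀ᵐ x ∂ν, (f₁ x > k * f₀ x → φ x = 1) ∧ (f₁ x < k * f₀ x → φ x = 0))
    (ψ : X → ℝ) (hψm : Measurable ψ) (hψ₀ : ∀ x, 0 ≤ ψ x) (hψ₁ : ∀ x, ψ x ≤ 1)
    (hsize : ∫ x, ψ x * f₀ x ∂ν ≤ ∫ x, φ x * f₀ x ∂ν)
    (hpower : ∫ x, φ x * f₁ x ∂ν ≤ ∫ x, ψ x * f₁ x ∂ν) :
    ∀ᵐ x ∂ν, f₁ x ≠ k * f₀ x → ψ x = φ x :=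
  neyman_pearson_necessity_general ν f₀ f₁ hint₀ hint₁ φ hφm hφ₀ hφ₁ k hk hform ψ hψm hψ₀ hψ₁ hsize
    hpower
end

section
/- First-order optimality condition for the expected-misclassification-cost minimum (tangency condition): if G is differentiable at a point a with 0 < a < 1 and the expected misclassification cost E has a local minimum at a, then the derivative of G at a equals the critical cost ratio, G′(a) = (P₀·(C_FP − C_TN))/(P₁·(C_FN − C_TP)). -/
/-! The expected cost is affine in the operating point `(α, G α)`: its slope in `α` is
`P₀Δ₀ - P₁Δ₁ G'(α)`. Fermat's theorem makes this slope vanish at an interior local minimum,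
and dividing by `P₁Δ₁ > 0` gives the tangency condition. -/

theorem hasDerivAt_expectedCost (P₀ P₁ CFP CTN CFN CTP : ℝ) {G : ℝ → ℝ} {g a : ℝ}
    (hG : HasDerivAt G g a) :
    HasDerivAt (fun α => P₀ * (α * CFP + (1 - α) * CTN) + P₁ * (G α * CTP + (1 - G α) * CFN))
      (P₀ * (CFP - CTN) - P₁ * (CFN - CTP) * g) a := by
  have affine : (fun α => P₀ * (α * CFP + (1 - α) * CTN) + P₁ * (G α * CTP + (1 - G α) * CFN))
      = fun α => P₀ * (CFP - CTN) * α - P₁ * (CFN - CTP) * G α + (P₀ * CTN + P₁ * CFN) := by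
    funext α; ring
  rw [affine]
  simpa using (((hasDerivAt_id a).const_mul (P₀ * (CFP - CTN))).sub
    (hG.const_mul (P₁ * (CFN - CTP)))).add_const (P₀ * CTN + P₁ * CFN)

theorem tangency_condition_general
    (P₀ P₁ CFP CTN CFN CTP : ℝ)
    (hP₁ : 0 < P₁)
    (hΔ₁ : 0 < CFN - CTP)
    (G : ℝ → ℝ) (E : ℝ → ℝ)
    (hE : ∀ α, E α = P₀ * (α * CFP + (1 - α) * CTN)
        + P₁ * (G α * CTP + (1 - G α) * CFN))
    (a : ℝ)
    (hG : DifferentiableAt ℝ G a)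
    (hmin : IsLocalMin E a) :
    deriv G a = (P₀ * (CFP - CTN)) / (P₁ * (CFN - CTP)) := by
  have hEderiv : HasDerivAt E (P₀ * (CFP - CTN) - P₁ * (CFN - CTP) * deriv G a) a := by
    rw [funext hE]
    exact hasDerivAt_expectedCost P₀ P₁ CFP CTN CFN CTP hG.hasDerivAt
  have slope_zero := hmin.hasDerivAt_eq_zero hEderiv
  have hΔ : P₁ * (CFN - CTP) ≠ 0 := (mul_pos hP₁ hΔ₁).ne'
  rw [eq_div_iff hΔ]
  linarith

/-- First-order optimality (tangency) condition for the
expected-misclassification-cost minimum: if the ROC curve `G` is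
differentiable at an interior point `a ∈ (0,1)` at which the expected
misclassification cost `E` has a local minimum, then
`G′(a) = (P₀·(C_FP − C_TN)) / (P₁·(C_FN − C_TP))`. -/
theorem tangency_condition
    (P₀ P₁ CFP CTN CFN CTP : ℝ)
    (hP₀ : 0 < P₀) (hP₁ : 0 < P₁)
    (hΔ₀ : 0 < CFP - CTN) (hΔ₁ : 0 < CFN - CTP)
    (G : ℝ → ℝ) (E : ℝ → ℝ)
    (hE : ∀ α, E α = P₀ * (α * CFP + (1 - α) * CTN)
        + P₁ * (G α * CTP + (1 - G α) * CFN))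
    (a : ℝ) (ha₀ : 0 < a) (ha₁ : a < 1)
    (hG : DifferentiableAt ℝ G a)
    (hmin : IsLocalMin E a) :
    deriv G a = (P₀ * (CFP - CTN)) / (P₁ * (CFN - CTP)) :=
  tangency_condition_general P₀ P₁ CFP CTN CFN CTP hP₁ hΔ₁ G E hE a hG hmin
end
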